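/- arXiv:1211.1867 — 2 statements merged into one kernel-verified Lean document; each statement's English description precedes it below -/
import Mathlib

section
/- Let δ be an admissible order function on A_n(K) and ≺_δ the monomial ordering on ℕ^{2n} refining δ by a fixed well monomial ordering ≺. For nonzero P, Q ∈ A_n(K): exp_δ(PQ) = exp_δ(P) + exp_δ(Q), where exp_δ denotes the ≺_δ-maximal element of the Newton diagram. -/
/-- The index set of normal monomials `x^α D^β` of the Weyl algebra `A_n(K)`. -/
abbrev WMon (n : ℕ) := (Fin n → ℕ) × (Fin n → ℕ)

/-- The normal monomial `x^α D^β`. -/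
def wmono {A : Type*} [Ring A] {n : ℕ} (x D : Fin n → A) (ab : WMon n) : A :=
  (List.ofFn fun i => x i ^ ab.1 i).prod * (List.ofFn fun i => D i ^ ab.2 i).prod

/-- A presentation of the Weyl algebra `A_n(K)`: an associative `K`-algebra `A` with
generators `x_i, D_i` satisfying `[x_i,x_j] = [D_i,D_j] = 0`, `[D_i,x_j] = δ_{ij}`,
such that the normal monomials `x^α D^β` form a `K`-basis. -/
structure WeylData (K : Type*) [Field K] (n : ℕ) (A : Type*) [Ring A] [Algebra K A] where
  x : Fin n → A
  D : Fin n → A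
  hxx : ∀ i j, x i * x j = x j * x i
  hDD : ∀ i j, D i * D j = D j * D i
  hDx : ∀ i j, D i * x j = x j * D i + (if i = j then 1 else 0)
  basis : Module.Basis (WMon n) K A
  basis_eq : ∀ ab, basis ab = wmono x D ab

/-- The Newton diagram of an operator. -/
noncomputable def ND {K : Type*} [Field K] {n : ℕ} {A : Type*} [Ring A] [Algebra K A]
    (W : WeylData K n A) (P : A) : Finset (WMon n) := (W.basis.repr P).support

/-- An order function on the Weyl algebra, with values in `ℤ ∪ {-∞} = WithBot ℤ`. -/
structure IsOrderFunction (K : Type*) [Field K] {A : Type*} [Ring A] [Algebra K A]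
    (δ : A → WithBot ℤ) : Prop where
  scalar : ∀ c : K, c ≠ 0 → δ (algebraMap K A c) = 0
  bot_iff : ∀ P : A, δ P = ⊥ ↔ P = 0
  add_le : ∀ P Q : A, δ (P + Q) ≤ max (δ P) (δ Q)
  mul : ∀ P Q : A, δ (P * Q) = δ P + δ Q

/-- An admissible order function: an order function such that `δ(P)` is the maximum of
`δ(x^α D^β)` over the Newton diagram of `P`. -/
def IsAdmissible {K : Type*} [Field K] {n : ℕ} {A : Type*} [Ring A] [Algebra K A]
    (W : WeylData K n A) (δ : A → WithBot ℤ) : Prop :=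
  IsOrderFunction K δ ∧
    ∀ P : A, P ≠ 0 → δ P = (ND W P).sup fun ab => δ (wmono W.x W.D ab)

/-- A well monomial ordering: an irreflexive, transitive, total relation, compatible with
addition, which is a well-ordering. -/
def WellMonomialOrdering {σ : Type*} [AddCommMonoid σ] (r : σ → σ → Prop) : Prop :=
  (∀ a, ¬ r a a) ∧ (∀ a b c, r a b → r b c → r a c) ∧
    (∀ a b, a ≠ b → r a b ∨ r b a) ∧
    (∀ a b c, r a b → r (a + c) (b + c)) ∧ WellFounded r

/-- The monomial ordering `≺_δ` refining the admissible order function `δ` by a fixed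
monomial ordering `r`. -/
def rdelta {K : Type*} [Field K] {n : ℕ} {A : Type*} [Ring A] [Algebra K A]
    (W : WeylData K n A) (δ : A → WithBot ℤ) (r : WMon n → WMon n → Prop) :
    WMon n → WMon n → Prop := fun a b =>
  δ (wmono W.x W.D a) < δ (wmono W.x W.D b) ∨
    (δ (wmono W.x W.D a) = δ (wmono W.x W.D b) ∧ r a b)

/-- `e` is the maximal element (exponent) of the Newton diagram of `P` w.r.t. `rd`. -/
def IsExp {K : Type*} [Field K] {n : ℕ} {A : Type*} [Ring A] [Algebra K A]
    (W : WeylData K n A) (rd : WMon n → WMon n → Prop) (P : A) (e : WMon n) : Prop :=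
  e ∈ ND W P ∧ ∀ f ∈ ND W P, f ≠ e → rd f e

/-- Index set of monomials `t^k x^α D^β` of the homogenised Weyl algebra. -/
abbrev HMon (n : ℕ) := ℕ × WMon n

/-- A presentation of the homogenised Weyl algebra `A_n[t]`: generators `t, x_i, D_i` with
`t` commuting with the `x_i, D_i`, `[x_i,x_j] = [D_i,D_j] = 0`, `[D_i,x_j] = δ_{ij} t²`,
and the monomials `t^k x^α D^β` forming a `K`-basis. -/
structure HWeylData (K : Type*) [Field K] (n : ℕ) (B : Type*) [Ring B] [Algebra K B] where
  t : B
  x : Fin n → B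
  D : Fin n → B
  htx : ∀ i, t * x i = x i * t
  htD : ∀ i, t * D i = D i * t
  hxx : ∀ i j, x i * x j = x j * x i
  hDD : ∀ i j, D i * D j = D j * D i
  hDx : ∀ i j, D i * x j = x j * D i + (if i = j then t ^ 2 else 0)
  basis : Module.Basis (HMon n) K B
  basis_eq : ∀ v, basis v = t ^ v.1 * wmono x D v.2

/-- Total degree `|α| + |β|` of a monomial of the Weyl algebra. -/
def wdeg {n : ℕ} (ab : WMon n) : ℕ := (∑ i, ab.1 i) + (∑ i, ab.2 i)

/-- The total order `ord^T(P)` of an operator `P`. -/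
noncomputable def ordT {K : Type*} [Field K] {n : ℕ} {A : Type*} [Ring A] [Algebra K A]
    (W : WeylData K n A) (P : A) : ℕ := (ND W P).sup wdeg

/-- The Newton diagram of an element of the homogenised Weyl algebra. -/
noncomputable def NDH {K : Type*} [Field K] {n : ℕ} {B : Type*} [Ring B] [Algebra K B]
    (V : HWeylData K n B) (H : B) : Finset (HMon n) := (V.basis.repr H).support

/-- The homogenisation `h(P) = Σ p_{αβ} t^{ord^T(P)-|α|-|β|} x^α D^β` of an operator. -/
noncomputable def homog {K : Type*} [Field K] {n : ℕ} {A B : Type*} [Ring A] [Algebra K A]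
    [Ring B] [Algebra K B] (W : WeylData K n A) (V : HWeylData K n B) (P : A) : B :=
  ∑ ab ∈ ND W P,
    W.basis.repr P ab • (V.t ^ (ordT W P - wdeg ab) * wmono V.x V.D ab)

/-- The dehomogenisation `H|_{t=1}` of an element of the homogenised Weyl algebra. -/
noncomputable def dehom {K : Type*} [Field K] {n : ℕ} {A B : Type*} [Ring A] [Algebra K A]
    [Ring B] [Algebra K B] (W : WeylData K n A) (V : HWeylData K n B) (H : B) : A :=
  ∑ v ∈ NDH V H, V.basis.repr H v • wmono W.x W.D v.2

/-- `H` is homogeneous of degree `d` in `A_n[t]` (degree of `t^k x^α D^β` is `k+|α|+|β|`). -/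
def IsHomogOfDeg {K : Type*} [Field K] {n : ℕ} {B : Type*} [Ring B] [Algebra K B]
    (V : HWeylData K n B) (H : B) (d : ℕ) : Prop :=
  ∀ v ∈ NDH V H, v.1 + wdeg v.2 = d

/-- Total degree of a monomial of `A_n[t]`. -/
def hdeg {n : ℕ} (v : HMon n) : ℕ := v.1 + wdeg v.2

/-- The well monomial ordering `⊲` on `ℕ^{2n+1}`: compare first by total degree
`k + |α| + |β|`, then by `≺_δ` on `(α,β)`. -/
def rT {K : Type*} [Field K] {n : ℕ} {A : Type*} [Ring A] [Algebra K A]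
    (W : WeylData K n A) (δ : A → WithBot ℤ) (r : WMon n → WMon n → Prop) :
    HMon n → HMon n → Prop := fun a b =>
  hdeg a < hdeg b ∨ (hdeg a = hdeg b ∧ rdelta W δ r a.2 b.2)

/-- `E` is the maximal element of the Newton diagram of `H ∈ A_n[t]` w.r.t. `rd`. -/
def IsExpH {K : Type*} [Field K] {n : ℕ} {B : Type*} [Ring B] [Algebra K B]
    (V : HWeylData K n B) (rd : HMon n → HMon n → Prop) (H : B) (E : HMon n) : Prop :=
  E ∈ NDH V H ∧ ∀ F ∈ NDH V H, F ≠ E → rd F E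

/-- The translated cone `e + ℕ^{2n+1}`. -/
def expCone {n : ℕ} (e : HMon n) : Set (HMon n) := {v | ∃ γ, v = e + γ}

/-!
Moving the `D`'s of `x^a D^b · x^c D^d` past the `x`'s produces the normal monomial
`x^{a+c} D^{b+d}` plus monomials `g` with `g + (γ, γ) = (a + c, b + d)`, `γ ≠ 0`: every use of
`D_i x_i = x_i D_i + 1` trades a pair `x_i D_i` for `1`. Admissibility of `δ` applied to
`D_i x_i` gives `δ(x_i) + δ(D_i) ≥ 0`, and `0` is the least element of a well monomial ordering,
so `1 ≺_δ x_i D_i` and all correction terms are `≺_δ`-smaller. Since `≺_δ` is compatible with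
addition, the product of the leading terms of `P` and `Q` gives the leading term of `PQ`, and
every other product of monomials of `P` and `Q` lies strictly below `e + f`.
-/

open Submodule

lemma Pi.induction_add_single {ι : Type*} [Finite ι] [DecidableEq ι] {p : (ι → ℕ) → Prop}
    (f : ι → ℕ) (zero : p 0) (add_single : ∀ f i, p f → p (f + Pi.single i 1)) : p f := by
  suffices h : ∀ g, p g → p (g + f) by simpa using h 0 zero
  induction f using Pi.single_induction with
  | zero => simp
  | add f f' hf hf' => intro g hg; rw [← add_assoc]; exact hf' _ (hf g hg)
  | single i m =>
    induction m with
    | zero => simp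
    | succ m ih => intro g hg; rw [Pi.single_add, ← add_assoc]; exact add_single _ i (ih g hg)

section powProd

variable {M : Type*} [Monoid M] {n : ℕ}

def powProd (g : Fin n → M) (m : Fin n → ℕ) : M := (List.ofFn fun i => g i ^ m i).prod

@[simp]
lemma powProd_zero (g : Fin n → M) : powProd g 0 = 1 := by simp [powProd]

variable {g : Fin n → M} (hg : ∀ i j, Commute (g i) (g j))
include hg

lemma powProd_eq_noncommProd (m : Fin n → ℕ) :
    powProd g m = Finset.univ.noncommProd (fun i => g i ^ m i)
      (fun i _ j _ _ => (hg i j).pow_pow _ _) := by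
  simp only [powProd, Finset.noncommProd, Fin.univ_val_map, Multiset.noncommProd_coe]

lemma powProd_add (m m' : Fin n → ℕ) : powProd g (m + m') = powProd g m * powProd g m' := by
  simp only [powProd_eq_noncommProd hg]
  refine (Finset.noncommProd_congr rfl (fun i _ => pow_add (g i) (m i) (m' i)) _).trans
    (Finset.noncommProd_mul_distrib _ _ _ _ ?_)
  exact fun i _ j _ _ => (hg i j).pow_pow _ _

lemma powProd_single (i : Fin n) (k : ℕ) : powProd g (Pi.single i k) = g i ^ k := by
  rw [powProd_eq_noncommProd hg]
  refine (Finset.mul_noncommProd_erase _ (Finset.mem_univ i) _ _).symm.trans ?_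
  rw [Pi.single_eq_same]
  conv_rhs => rw [← mul_one (g i ^ k)]
  congr 1
  exact (Finset.noncommProd_eq_pow_card _ _ _ 1 fun j hj => by
    simp [Finset.ne_of_mem_erase hj]).trans (one_pow _)

lemma powProd_single_add (m : Fin n → ℕ) (i : Fin n) :
    powProd g (Pi.single i 1 + m) = g i * powProd g m := by
  rw [powProd_add hg, powProd_single hg, pow_one]

lemma powProd_add_single (m : Fin n → ℕ) (i : Fin n) :
    powProd g (m + Pi.single i 1) = powProd g m * g i := by
  rw [powProd_add hg, powProd_single hg, pow_one]

end powProd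

section SpanMul

variable {R A : Type*} [CommSemiring R] [Semiring A] [Algebra R A] {s : Set A} {M : Submodule R A}
  {y : A}

lemma Submodule.mul_right_mem_of_mem_span (c : A) (hy : y ∈ span R s) (h : ∀ z ∈ s, z * c ∈ M) :
    y * c ∈ M :=
  (span_le (p := M.comap (LinearMap.mulRight R c))).2 h hy

lemma Submodule.mul_left_mem_of_mem_span (c : A) (hy : y ∈ span R s) (h : ∀ z ∈ s, c * z ∈ M) :
    c * y ∈ M :=
  (span_le (p := M.comap (LinearMap.mulLeft R c))).2 h hy

end SpanMul

lemma pi_single_pair_ne_zero {n : ℕ} (i : Fin n) : ((Pi.single i 1, Pi.single i 1) : WMon n) ≠ 0 :=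
  fun h => by simpa using congr_fun (congr_arg Prod.fst h) i

/-- `zero_lt_diag` (`1 ≺ x_i D_i`) is what makes the correction terms of a normally ordered
product of monomials smaller than its leading term. -/
structure IsWeylOrder {n : ℕ} (rd : WMon n → WMon n → Prop) : Prop where
  irrefl : ∀ a, ¬ rd a a
  trans : ∀ {a b c}, rd a b → rd b c → rd a c
  add_right : ∀ {a b} c, rd a b → rd (a + c) (b + c)
  zero_lt_diag : ∀ i, rd 0 (Pi.single i 1, Pi.single i 1)

namespace IsWeylOrder

variable {n : ℕ} {rd : WMon n → WMon n → Prop} (hrd : IsWeylOrder rd)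
include hrd

lemma add_left {a b : WMon n} (c : WMon n) (h : rd a b) : rd (c + a) (c + b) := by
  simpa only [add_comm c] using hrd.add_right c h

lemma lt_add_diag (g : WMon n) (i : Fin n) : rd g (g + (Pi.single i 1, Pi.single i 1)) := by
  simpa using hrd.add_left g (hrd.zero_lt_diag i)

end IsWeylOrder

namespace WeylData

variable {K : Type*} [Field K] {n : ℕ} {A : Type*} [Ring A] [Algebra K A] (W : WeylData K n A)

lemma x_commute (i j : Fin n) : Commute (W.x i) (W.x j) := W.hxx i j

lemma D_commute (i j : Fin n) : Commute (W.D i) (W.D j) := W.hDD i j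

lemma wmono_eq_powProd (g : WMon n) : wmono W.x W.D g = powProd W.x g.1 * powProd W.D g.2 := rfl

lemma basis_mk (α β : Fin n → ℕ) : W.basis (α, β) = powProd W.x α * powProd W.D β :=
  W.basis_eq (α, β)

lemma wmono_zero : wmono W.x W.D 0 = 1 := by
  simp [wmono_eq_powProd]

lemma wmono_diag (i : Fin n) : wmono W.x W.D (Pi.single i 1, Pi.single i 1) = W.x i * W.D i := by
  rw [wmono_eq_powProd, powProd_single W.x_commute, powProd_single W.D_commute, pow_one, pow_one]

lemma zero_mem_ND_D_mul_x (i : Fin n) : 0 ∈ ND W (W.D i * W.x i) := by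
  rw [ND, W.hDx, if_pos rfl, ← W.wmono_diag, ← W.wmono_zero, ← W.basis_eq, ← W.basis_eq]
  simp [pi_single_pair_ne_zero i]

lemma D_mul_powProd_x_sub_mem_span (j : Fin n) (α : Fin n → ℕ) :
    W.D j * powProd W.x α - powProd W.x α * W.D j ∈
      span K (powProd W.x '' {α' | α' + Pi.single j 1 = α}) := by
  induction α using Pi.induction_add_single with
  | zero => simp
  | add_single α k ih =>
    have hcomm : W.D j * W.x k - W.x k * W.D j = if j = k then 1 else 0 := by
      rw [W.hDx, add_sub_cancel_left]
    have hsplit : W.D j * (powProd W.x α * W.x k) - powProd W.x α * W.x k * W.D j =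
        (W.D j * powProd W.x α - powProd W.x α * W.D j) * W.x k +
          powProd W.x α * (W.D j * W.x k - W.x k * W.D j) := by
      noncomm_ring
    rw [powProd_add_single W.x_commute, hsplit, hcomm]
    refine add_mem (mul_right_mem_of_mem_span _ ih ?_) ?_
    · rintro _ ⟨α', hα', rfl⟩
      rw [← powProd_add_single W.x_commute]
      exact subset_span ⟨α' + Pi.single k 1, by rw [← hα', add_right_comm]; rfl, rfl⟩
    · split_ifs with hjk
      · subst hjk
        rw [mul_one]
        exact subset_span ⟨α, rfl, rfl⟩
      · rw [mul_zero]
        exact zero_mem _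

def lowerSpan (rd : WMon n → WMon n → Prop) (c : WMon n) : Submodule K A :=
  span K (W.basis '' {g | rd g c})

variable {rd : WMon n → WMon n → Prop}

lemma basis_mem_lowerSpan {g c : WMon n} (h : rd g c) : W.basis g ∈ W.lowerSpan rd c :=
  subset_span (Set.mem_image_of_mem _ h)

variable (hrd : IsWeylOrder rd)
include hrd

lemma lowerSpan_mono {c c' : WMon n} (h : rd c c') : W.lowerSpan rd c ≤ W.lowerSpan rd c' :=
  span_mono (Set.image_mono fun _ hg => hrd.trans hg h)

lemma mem_lowerSpan_of_sub_basis_mem {y : A} {g c : WMon n}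
    (hy : y - W.basis g ∈ W.lowerSpan rd g) (hg : rd g c) : y ∈ W.lowerSpan rd c := by
  simpa using add_mem (W.lowerSpan_mono hrd hg hy) (W.basis_mem_lowerSpan hg)

lemma D_mul_basis_sub_mem_lowerSpan (j : Fin n) (b : WMon n) :
    W.D j * W.basis b - W.basis (b + (0, Pi.single j 1)) ∈
      W.lowerSpan rd (b + (0, Pi.single j 1)) := by
  obtain ⟨α, β⟩ := b
  have hsplit : W.D j * W.basis (α, β) - W.basis ((α, β) + (0, Pi.single j 1)) =
      (W.D j * powProd W.x α - powProd W.x α * W.D j) * powProd W.D β := by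
    simp only [basis_mk, Prod.mk_add_mk, add_zero, add_comm β,
      powProd_single_add W.D_commute]
    noncomm_ring
  rw [hsplit]
  refine mul_right_mem_of_mem_span _ (W.D_mul_powProd_x_sub_mem_span j α) ?_
  rintro _ ⟨α', hα', rfl⟩
  rw [← basis_mk]
  refine W.basis_mem_lowerSpan ?_
  convert hrd.lt_add_diag (α', β) j using 1
  simp [← show α' + Pi.single j 1 = α from hα']

theorem basis_mul_basis_sub_mem_lowerSpan (a b : WMon n) :
    W.basis a * W.basis b - W.basis (a + b) ∈ W.lowerSpan rd (a + b) := by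
  obtain ⟨α, β⟩ := a
  induction β using Pi.induction_add_single generalizing b with
  | zero =>
    obtain ⟨γ, ε⟩ := b
    simp [basis_mk, powProd_add W.x_commute, mul_assoc]
  | add_single β j ih =>
    set b' := b + (0, Pi.single j 1)
    have hsum : (α, β) + b' = (α, β + Pi.single j 1) + b := by
      refine Prod.ext (by simp [b']) ?_
      simp only [b', Prod.snd_add]
      abel
    have hsplit : W.basis (α, β + Pi.single j 1) * W.basis b - W.basis ((α, β) + b') =
        W.basis (α, β) * (W.D j * W.basis b - W.basis b') +
          (W.basis (α, β) * W.basis b' - W.basis ((α, β) + b')) := by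
      rw [basis_mk, powProd_add_single W.D_commute, ← mul_assoc, ← basis_mk]
      noncomm_ring
    rw [← hsum, hsplit]
    refine add_mem (mul_left_mem_of_mem_span _ (W.D_mul_basis_sub_mem_lowerSpan hrd j b) ?_)
      (ih b')
    rintro _ ⟨g, hg, rfl⟩
    exact W.mem_lowerSpan_of_sub_basis_mem hrd (ih g) (hrd.add_left _ hg)

lemma basis_mul_basis_mem_lowerSpan {a b c : WMon n} (h : rd (a + b) c) :
    W.basis a * W.basis b ∈ W.lowerSpan rd c :=
  W.mem_lowerSpan_of_sub_basis_mem hrd (W.basis_mul_basis_sub_mem_lowerSpan hrd a b) h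

lemma mul_mem_lowerSpan {S T : Set (WMon n)} {c : WMon n} {y z : A}
    (hy : y ∈ span K (W.basis '' S)) (hz : z ∈ span K (W.basis '' T))
    (h : ∀ a ∈ S, ∀ b ∈ T, rd (a + b) c) : y * z ∈ W.lowerSpan rd c := by
  refine mul_right_mem_of_mem_span z hy ?_
  rintro _ ⟨a, ha, rfl⟩
  refine mul_left_mem_of_mem_span _ hz ?_
  rintro _ ⟨b, hb, rfl⟩
  exact W.basis_mul_basis_mem_lowerSpan hrd (h a ha b hb)

theorem mul_sub_smul_basis_mem_lowerSpan {y z : A} {a b : WMon n} {s t : K}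
    (hy : y - s • W.basis a ∈ W.lowerSpan rd a) (hz : z - t • W.basis b ∈ W.lowerSpan rd b) :
    y * z - (s * t) • W.basis (a + b) ∈ W.lowerSpan rd (a + b) := by
  have hsplit : y * z - (s * t) • W.basis (a + b) =
      (s * t) • (W.basis a * W.basis b - W.basis (a + b)) +
        s • (W.basis a * (z - t • W.basis b)) + t • ((y - s • W.basis a) * W.basis b) +
          (y - s • W.basis a) * (z - t • W.basis b) := by
    simp only [mul_sub, sub_mul, smul_mul_assoc, mul_smul_comm, smul_sub, smul_smul]
    module
  have mem_span_self (g : WMon n) : W.basis g ∈ span K (W.basis '' {g}) :=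
    subset_span (Set.mem_image_of_mem _ rfl)
  rw [hsplit]
  refine add_mem (add_mem (add_mem ?_ ?_) ?_) ?_
  · exact smul_mem _ _ (W.basis_mul_basis_sub_mem_lowerSpan hrd a b)
  · refine smul_mem _ _ (W.mul_mem_lowerSpan hrd (mem_span_self a) hz ?_)
    rintro _ rfl b' hb'
    exact hrd.add_left _ hb'
  · refine smul_mem _ _ (W.mul_mem_lowerSpan hrd hy (mem_span_self b) ?_)
    rintro a' ha' _ rfl
    exact hrd.add_right _ ha'
  · refine W.mul_mem_lowerSpan hrd hy hz fun a' ha' b' hb' => ?_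
    exact hrd.trans (hrd.add_right b' ha') (hrd.add_left a hb')

end WeylData

section LeadingTerm

variable {K : Type*} [Field K] {n : ℕ} {A : Type*} [Ring A] [Algebra K A] {W : WeylData K n A}
  {rd : WMon n → WMon n → Prop} {P : A} {e : WMon n}

lemma IsExp.repr_ne_zero (he : IsExp W rd P e) : W.basis.repr P e ≠ 0 :=
  Finsupp.mem_support_iff.1 he.1

lemma IsExp.sub_smul_basis_mem_lowerSpan (he : IsExp W rd P e) :
    P - W.basis.repr P e • W.basis e ∈ W.lowerSpan rd e := by
  refine W.basis.mem_span_image.2 fun g hg => ?_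
  have hg' : W.basis.repr P g - (if e = g then W.basis.repr P e else 0) ≠ 0 := by
    simpa [Finsupp.single_apply] using hg
  by_cases hge : g = e
  · subst hge
    simp at hg'
  · exact he.2 g (Finsupp.mem_support_iff.2 (by simpa [Ne.symm hge] using hg')) hge

lemma isExp_of_sub_smul_basis_mem_lowerSpan (hirr : ¬ rd e e) {c : K} (hc : c ≠ 0)
    (h : P - c • W.basis e ∈ W.lowerSpan rd e) : IsExp W rd P e := by
  have hlt : ∀ g, W.basis.repr P g - (if e = g then c else 0) ≠ 0 → rd g e := fun g hg =>
    W.basis.mem_span_image.1 h (by simpa [Finsupp.single_apply] using hg)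
  refine ⟨Finsupp.mem_support_iff.2 fun h0 => hirr (hlt e (by simp [h0, hc])), ?_⟩
  intro g hg hge
  exact hlt g (by simpa [Ne.symm hge] using Finsupp.mem_support_iff.1 hg)

theorem IsWeylOrder.isExp_mul (hrd : IsWeylOrder rd) {Q : A} {f : WMon n}
    (he : IsExp W rd P e) (hf : IsExp W rd Q f) : IsExp W rd (P * Q) (e + f) :=
  isExp_of_sub_smul_basis_mem_lowerSpan (hrd.irrefl _)
    (mul_ne_zero he.repr_ne_zero hf.repr_ne_zero)
    (W.mul_sub_smul_basis_mem_lowerSpan hrd he.sub_smul_basis_mem_lowerSpan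
      hf.sub_smul_basis_mem_lowerSpan)

end LeadingTerm

lemma WellMonomialOrdering.zero_lt {σ : Type*} [AddCommMonoid σ] {r : σ → σ → Prop}
    (hr : WellMonomialOrdering r) {w : σ} (hw : w ≠ 0) : r 0 w := by
  obtain ⟨-, -, htotal, hadd, hwf⟩ := hr
  -- if `w ≺ 0` then `0 ≻ w ≻ 2w ≻ ⋯` would descend forever
  have hnot : ∀ a, ¬ r (a + w) a := fun a =>
    hwf.induction (C := fun a => ¬ r (a + w) a) a fun a ih h => ih (a + w) h (hadd _ _ w h)
  exact (htotal 0 w hw.symm).resolve_right fun h => hnot 0 (by rwa [zero_add])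

namespace IsOrderFunction

variable {K : Type*} [Field K] {n : ℕ} {A : Type*} [Ring A] [Algebra K A] {δ : A → WithBot ℤ}
  (hδ : IsOrderFunction K δ) (W : WeylData K n A)
include hδ

lemma apply_wmono_add (u v : WMon n) :
    δ (wmono W.x W.D (u + v)) = δ (wmono W.x W.D u) + δ (wmono W.x W.D v) := by
  simp only [W.wmono_eq_powProd, Prod.fst_add, Prod.snd_add, powProd_add W.x_commute,
    powProd_add W.D_commute, hδ.mul]
  abel

lemma apply_wmono_ne_bot (u : WMon n) : δ (wmono W.x W.D u) ≠ ⊥ := fun h =>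
  W.basis.ne_zero u (by rw [W.basis_eq]; exact (hδ.bot_iff _).1 h)

end IsOrderFunction

namespace IsAdmissible

variable {K : Type*} [Field K] {n : ℕ} {A : Type*} [Ring A] [Algebra K A] {W : WeylData K n A}
  {δ : A → WithBot ℤ} (hδ : IsAdmissible W δ)
include hδ

lemma apply_wmono_le_of_mem_ND {P : A} {g : WMon n} (hg : g ∈ ND W P) :
    δ (wmono W.x W.D g) ≤ δ P := by
  have hP : P ≠ 0 := by
    rintro rfl
    simp [ND] at hg
  rw [hδ.2 P hP]
  exact Finset.le_sup (f := fun g => δ (wmono W.x W.D g)) hg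

lemma apply_wmono_zero_le_diag (i : Fin n) :
    δ (wmono W.x W.D 0) ≤ δ (wmono W.x W.D (Pi.single i 1, Pi.single i 1)) :=
  calc δ (wmono W.x W.D 0) ≤ δ (W.D i * W.x i) :=
        hδ.apply_wmono_le_of_mem_ND (W.zero_mem_ND_D_mul_x i)
    _ = δ (wmono W.x W.D (Pi.single i 1, Pi.single i 1)) := by
        rw [W.wmono_diag, hδ.1.mul, hδ.1.mul, add_comm]

theorem isWeylOrder_rdelta {r : WMon n → WMon n → Prop} (hr : WellMonomialOrdering r) :
    IsWeylOrder (rdelta W δ r) where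
  irrefl a := by
    rintro (h | ⟨-, h⟩)
    exacts [lt_irrefl _ h, hr.1 a h]
  trans := by
    rintro a b c (hab | ⟨hab, rab⟩) (hbc | ⟨hbc, rbc⟩)
    · exact Or.inl (hab.trans hbc)
    · exact Or.inl (hbc ▸ hab)
    · exact Or.inl (hab ▸ hbc)
    · exact Or.inr ⟨hab.trans hbc, hr.2.1 a b c rab rbc⟩
  add_right := by
    rintro a b c (hab | ⟨hab, rab⟩)
    · left
      simp only [hδ.1.apply_wmono_add W]
      exact WithBot.add_lt_add_right (hδ.1.apply_wmono_ne_bot W c) hab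
    · exact Or.inr ⟨by simp only [hδ.1.apply_wmono_add W, hab], hr.2.2.2.1 a b c rab⟩
  zero_lt_diag i := by
    rcases (hδ.apply_wmono_zero_le_diag i).lt_or_eq with h | h
    · exact Or.inl h
    · exact Or.inr ⟨h, hr.zero_lt (pi_single_pair_ne_zero i)⟩

end IsAdmissible

theorem exp_mul_general (K : Type*) [Field K] (n : ℕ) (A : Type*) [Ring A] [Algebra K A]
    (W : WeylData K n A) (δ : A → WithBot ℤ) (hδ : IsAdmissible W δ)
    (r : WMon n → WMon n → Prop) (hr : WellMonomialOrdering r)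
    (P Q : A) (e f : WMon n)
    (he : IsExp W (rdelta W δ r) P e) (hf : IsExp W (rdelta W δ r) Q f) :
    IsExp W (rdelta W δ r) (P * Q) (e + f) :=
  (hδ.isWeylOrder_rdelta hr).isExp_mul he hf

/-- `exp_δ(PQ) = exp_δ(P) + exp_δ(Q)` for nonzero `P, Q`. -/
theorem exp_mul (K : Type*) [Field K] (n : ℕ) (A : Type*) [Ring A] [Algebra K A]
    (W : WeylData K n A) (δ : A → WithBot ℤ) (hδ : IsAdmissible W δ)
    (r : WMon n → WMon n → Prop) (hr : WellMonomialOrdering r)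
    (P Q : A) (hP : P ≠ 0) (hQ : Q ≠ 0) (e f : WMon n)
    (he : IsExp W (rdelta W δ r) P e) (hf : IsExp W (rdelta W δ r) Q f) :
    IsExp W (rdelta W δ r) (P * Q) (e + f) :=
  exp_mul_general K n A W δ hδ r hr P Q e f he hf
end

section
/- Let I be a nonzero left ideal of A_n(K) and let P_1,...,P_r ∈ I be a δ-standard basis of I, i.e., Exp_δ(I) = ∪_{i=1}^r (exp_δ(P_i) + ℕ^{2n}). Then the principal symbols σ_δ(P_1),...,σ_δ(P_r) generate the graded ideal gr_δ(I) in gr_δ(A_n(K)). -/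
/-!
Every nonzero `Q ∈ I` has exponent `exp(Q) = exp(P_i) + γ` for some `i`. Putting
`x^γ D^γ' · P_i` in normal order only creates terms in which some pairs `x_j D_j` cancel;
since `D_j x_j = x_j D_j + 1` forces `δ(x_j D_j) ≥ 0`, these terms are `≺_δ`-smaller, so the
exponent of `x^γ D^γ' · P_i` is `γ + exp(P_i)`. Subtracting a multiple `R` of it from `Q` kills
the leading term. The remainder either has smaller `δ`-order, and then `σ(Q) = σ(R)`, or the
same order and a smaller exponent for `r`, and then `σ(Q) = σ(R) + σ(Q - R)`; well-founded
induction along `r` concludes.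
-/

def mpow {M : Type*} [Monoid M] {m : ℕ} (f : Fin m → M) (a : Fin m → ℕ) : M :=
  (List.ofFn fun i => f i ^ a i).prod

section mpow
variable {M : Type*} [Monoid M] {m : ℕ}

theorem mpow_zero (f : Fin m → M) : mpow f 0 = 1 := by
  simp [mpow]

theorem mpow_succ (f : Fin (m + 1) → M) (a : Fin (m + 1) → ℕ) :
    mpow f a = f 0 ^ a 0 * mpow (f ∘ Fin.succ) (a ∘ Fin.succ) := by
  simp [mpow, List.ofFn_succ, Function.comp]

theorem mpow_add {f : Fin m → M} (hf : ∀ i j, Commute (f i) (f j)) (a b : Fin m → ℕ) :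
    mpow f (a + b) = mpow f a * mpow f b := by
  induction m with
  | zero => simp [mpow]
  | succ m ih =>
    have htail : Commute (f 0 ^ b 0) (mpow (f ∘ Fin.succ) (a ∘ Fin.succ)) :=
      Commute.list_prod_right _ _ <| by
        simp only [List.mem_ofFn, forall_exists_index, forall_apply_eq_imp_iff]
        exact fun i => ((hf 0 i.succ).pow_pow _ _)
    rw [mpow_succ, mpow_succ f a, mpow_succ f b, Pi.add_apply, pow_add,
      show (a + b) ∘ Fin.succ = a ∘ Fin.succ + b ∘ Fin.succ from rfl,
      ih (f := f ∘ Fin.succ) (fun i j => hf _ _), mul_assoc, ← mul_assoc (f 0 ^ b 0), htail.eq]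
    simp only [mul_assoc]

theorem mpow_single (f : Fin m → M) (i : Fin m) : mpow f (Pi.single i 1) = f i := by
  induction m with
  | zero => exact i.elim0
  | succ m ih =>
    rw [mpow_succ]
    rcases Fin.eq_zero_or_eq_succ i with rfl | ⟨j, rfl⟩
    · simp [Function.comp_def, mpow_zero, ← Pi.zero_def]
    · have htail : (Pi.single j.succ 1 : Fin (m + 1) → ℕ) ∘ Fin.succ = Pi.single j 1 :=
        funext fun k => by simp [Pi.single_apply]
      simp [htail, ih]

theorem mpow_single_add {f : Fin m → M} (hf : ∀ i j, Commute (f i) (f j)) (i : Fin m)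
    (a : Fin m → ℕ) : mpow f (Pi.single i 1 + a) = f i * mpow f a := by
  rw [mpow_add hf, mpow_single]

end mpow

theorem multiIndex_induction {m : ℕ} {p : (Fin m → ℕ) → Prop} (zero : p 0)
    (single_add : ∀ i a, p a → p (Pi.single i 1 + a)) (a : Fin m → ℕ) : p a := by
  classical
  suffices h : ∀ b, p b → p (a + b) by simpa using h 0 zero
  induction a using Pi.single_induction with
  | zero => simp
  | add f g hf hg => exact fun b hb => by simpa [add_assoc] using hf _ (hg b hb)
  | single i k =>
    induction k with
    | zero => simp
    | succ k ih =>
      intro b hb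
      rw [← Nat.add_comm 1 k, Pi.single_add, add_assoc]
      exact single_add i _ (ih b hb)

theorem map_mem_span_of_forall_mem {R M N : Type*} [Semiring R] [AddCommMonoid M] [Module R M]
    [AddCommMonoid N] [Module R N] (f : M →ₗ[R] N) {S : Set M} {T : Set N}
    (h : ∀ w ∈ S, f w ∈ Submodule.span R T) {L : M} (hL : L ∈ Submodule.span R S) :
    f L ∈ Submodule.span R T :=
  (Submodule.map_span_le f S _).mpr h (Submodule.mem_map_of_mem hL)

theorem wmono_eq_mpow {A : Type*} [Ring A] {n : ℕ} (x D : Fin n → A) (ab : WMon n) :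
    wmono x D ab = mpow x ab.1 * mpow D ab.2 := rfl

theorem wmono_zero {A : Type*} [Ring A] {n : ℕ} (x D : Fin n → A) : wmono x D 0 = 1 := by
  simp [wmono_eq_mpow, mpow_zero]

def diagBelow {n : ℕ} (e : WMon n) : Set (WMon n) :=
  {v | ∃ μ : Fin n → ℕ, μ ≠ 0 ∧ v + (μ, μ) = e}

namespace WeylData

variable {K : Type*} [Field K] {n : ℕ} {A : Type*} [Ring A] [Algebra K A] (W : WeylData K n A)

theorem D_mul_mpow_x_sub_mem_span (i : Fin n) (a : Fin n → ℕ) :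
    W.D i * mpow W.x a - mpow W.x a * W.D i ∈
      Submodule.span K (mpow W.x '' {v | v + Pi.single i 1 = a}) := by
  induction a using multiIndex_induction with
  | zero => simp [mpow_zero]
  | single_add j a ih =>
    have hsplit : W.D i * (W.x j * mpow W.x a) - W.x j * mpow W.x a * W.D i
        = W.x j * (W.D i * mpow W.x a - mpow W.x a * W.D i)
          + (if i = j then mpow W.x a else 0) := by
      rw [← mul_assoc, W.hDx]
      split_ifs <;> noncomm_ring
    rw [mpow_single_add W.hxx, hsplit]
    refine add_mem (map_mem_span_of_forall_mem (LinearMap.mulLeft K (W.x j)) ?_ ih) ?_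
    · rintro _ ⟨v, rfl, rfl⟩
      exact Submodule.subset_span
        ⟨Pi.single j 1 + v, add_assoc _ _ _, mpow_single_add W.hxx j v⟩
    · split_ifs with hij
      · exact Submodule.subset_span ⟨a, by simp [hij, add_comm], rfl⟩
      · exact zero_mem _

theorem mpow_D_mul_mpow_x_sub_mem_span (c a : Fin n → ℕ) :
    mpow W.D c * mpow W.x a - mpow W.x a * mpow W.D c ∈
      Submodule.span K (wmono W.x W.D '' diagBelow (a, c)) := by
  induction c using multiIndex_induction with
  | zero => simp [mpow_zero]
  | single_add i c ih =>
    have hsplit : W.D i * mpow W.D c * mpow W.x a - mpow W.x a * (W.D i * mpow W.D c)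
        = W.D i * (mpow W.D c * mpow W.x a - mpow W.x a * mpow W.D c)
          + (W.D i * mpow W.x a - mpow W.x a * W.D i) * mpow W.D c := by
      noncomm_ring
    rw [mpow_single_add W.hDD, hsplit]
    refine add_mem (map_mem_span_of_forall_mem (LinearMap.mulLeft K (W.D i)) ?_ ih)
      (map_mem_span_of_forall_mem (LinearMap.mulRight K (mpow W.D c)) ?_
        (W.D_mul_mpow_x_sub_mem_span i a))
    · rintro _ ⟨⟨v, w⟩, ⟨μ, hμ, hvw⟩, rfl⟩
      obtain ⟨rfl, rfl⟩ := Prod.ext_iff.mp hvw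
      have hsplit' : W.D i * wmono W.x W.D (v, w) = wmono W.x W.D (v, Pi.single i 1 + w)
          + (W.D i * mpow W.x v - mpow W.x v * W.D i) * mpow W.D w := by
        simp only [wmono_eq_mpow, mpow_single_add W.hDD]
        noncomm_ring
      rw [LinearMap.mulLeft_apply, hsplit']
      refine add_mem (Submodule.subset_span ⟨_, ⟨μ, hμ, ?_⟩, rfl⟩)
        (map_mem_span_of_forall_mem (LinearMap.mulRight K (mpow W.D w)) ?_
          (W.D_mul_mpow_x_sub_mem_span i v))
      · simp [add_assoc]
      · rintro _ ⟨v', rfl, rfl⟩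
        refine Submodule.subset_span ⟨(v', w), ⟨μ + Pi.single i 1, ?_, ?_⟩, rfl⟩
        · exact fun h => by simpa using congrFun h i
        · simp only [Prod.mk_add_mk, Prod.mk.injEq]
          constructor <;> abel
    · rintro _ ⟨v, rfl, rfl⟩
      refine Submodule.subset_span ⟨(v, c), ⟨Pi.single i 1, fun h => ?_, ?_⟩, rfl⟩
      · simpa using congrFun h i
      · simp [add_comm]

theorem wmono_mul_wmono_sub_mem_span (a b : WMon n) :
    wmono W.x W.D a * wmono W.x W.D b - wmono W.x W.D (a + b) ∈
      Submodule.span K (wmono W.x W.D '' diagBelow (a + b)) := by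
  have hsplit : wmono W.x W.D a * wmono W.x W.D b - wmono W.x W.D (a + b)
      = mpow W.x a.1 * ((mpow W.D a.2 * mpow W.x b.1 - mpow W.x b.1 * mpow W.D a.2)
        * mpow W.D b.2) := by
    simp only [wmono_eq_mpow, Prod.fst_add, Prod.snd_add, mpow_add W.hxx, mpow_add W.hDD]
    noncomm_ring
  rw [hsplit]
  refine map_mem_span_of_forall_mem
    (LinearMap.mulLeft K (mpow W.x a.1) ∘ₗ LinearMap.mulRight K (mpow W.D b.2)) ?_
    (W.mpow_D_mul_mpow_x_sub_mem_span a.2 b.1)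
  rintro _ ⟨⟨v, w⟩, ⟨μ, hμ, hvw⟩, rfl⟩
  simp only [Prod.mk_add_mk, Prod.mk.injEq] at hvw
  refine Submodule.subset_span ⟨(a.1 + v, w + b.2), ⟨μ, hμ, ?_⟩, ?_⟩
  · refine Prod.ext ?_ ?_ <;> simp only [Prod.fst_add, Prod.snd_add, ← hvw.1, ← hvw.2] <;> abel
  · simp only [LinearMap.coe_comp, Function.comp_apply, LinearMap.mulLeft_apply,
      LinearMap.mulRight_apply, wmono_eq_mpow, mpow_add W.hxx, mpow_add W.hDD, mul_assoc]

end WeylData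

namespace IsOrderFunction

variable {K : Type*} [Field K] {A : Type*} [Ring A] [Algebra K A] {δ : A → WithBot ℤ}
  (hδ : IsOrderFunction K δ)
include hδ

theorem map_one : δ 1 = 0 := by
  simpa using hδ.scalar 1 one_ne_zero

theorem map_smul {c : K} (hc : c ≠ 0) (P : A) : δ (c • P) = δ P := by
  rw [Algebra.smul_def, hδ.mul, hδ.scalar c hc, zero_add]

theorem map_neg (P : A) : δ (-P) = δ P := by
  simpa using hδ.map_smul (neg_ne_zero.mpr one_ne_zero) P

theorem nonneg_of_map_add_one {P : A} (h : δ (P + 1) = δ P) : 0 ≤ δ P := by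
  have h1 := hδ.add_le (P + 1) (-P)
  rwa [add_neg_cancel_comm, hδ.map_one, h, hδ.map_neg, max_self] at h1

end IsOrderFunction

namespace IsAdmissible

variable {K : Type*} [Field K] {n : ℕ} {A : Type*} [Ring A] [Algebra K A] {W : WeylData K n A}
  {δ : A → WithBot ℤ} (hδ : IsAdmissible W δ)
include hδ

theorem map_wmono_add (a b : WMon n) :
    δ (wmono W.x W.D (a + b)) = δ (wmono W.x W.D a) + δ (wmono W.x W.D b) := by
  simp only [wmono_eq_mpow, Prod.fst_add, Prod.snd_add, mpow_add W.hxx, mpow_add W.hDD,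
    hδ.1.mul]
  abel

theorem map_wmono_ne_bot (a : WMon n) : δ (wmono W.x W.D a) ≠ ⊥ := by
  rw [Ne, hδ.1.bot_iff, ← W.basis_eq]
  exact W.basis.ne_zero a

theorem map_wmono_diag_nonneg (μ : Fin n → ℕ) : 0 ≤ δ (wmono W.x W.D (μ, μ)) := by
  induction μ using multiIndex_induction with
  | zero => rw [Prod.mk_zero_zero, wmono_zero, hδ.1.map_one]
  | single_add i μ ih =>
    have hxD : 0 ≤ δ (W.x i * W.D i) := by
      have hDx : W.D i * W.x i = W.x i * W.D i + 1 := by simpa using W.hDx i i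
      refine hδ.1.nonneg_of_map_add_one ?_
      rw [← hDx, hδ.1.mul, hδ.1.mul, add_comm]
    have hsplit : ((Pi.single i 1 + μ, Pi.single i 1 + μ) : WMon n)
        = (Pi.single i 1, Pi.single i 1) + (μ, μ) := rfl
    rw [hsplit, hδ.map_wmono_add]
    refine add_nonneg ?_ ih
    simpa only [wmono_eq_mpow, mpow_single] using hxD

end IsAdmissible

theorem Finset.exists_forall_rel_of_isStrictTotalOrder {α : Type*} {t : α → α → Prop}
    [IsStrictTotalOrder α t] (s : Finset α) (hs : s.Nonempty) :
    ∃ e ∈ s, ∀ f ∈ s, f ≠ e → t f e := by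
  classical
  let := linearOrderOfSTO t
  exact ⟨s.max' hs, s.max'_mem hs, fun f hf hne => lt_of_le_of_ne (s.le_max' f hf) hne⟩

theorem WellMonomialOrdering.rel_add_self {σ : Type*} [AddCancelCommMonoid σ]
    {t : σ → σ → Prop} (ht : WellMonomialOrdering t) {c : σ} (hc : c ≠ 0) (a : σ) :
    t a (a + c) := by
  obtain ⟨-, -, htot, hadd, hwf⟩ := ht
  refine (htot _ _ (by simpa using hc)).resolve_right fun h => ?_
  refine (wellFounded_iff_isEmpty_descending_chain.1 hwf).elim
    ⟨fun k => a + k • c, fun k => ?_⟩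
  simpa [succ_nsmul', add_assoc] using hadd _ _ (k • c) h

section rdelta

variable {K : Type*} [Field K] {n : ℕ} {A : Type*} [Ring A] [Algebra K A] {W : WeylData K n A}
  {δ : A → WithBot ℤ} {r : WMon n → WMon n → Prop}

theorem rdelta_trans (hr : WellMonomialOrdering r) {a b c : WMon n} (hab : rdelta W δ r a b)
    (hbc : rdelta W δ r b c) : rdelta W δ r a c := by
  rcases hab with hab | ⟨hab, hab'⟩ <;> rcases hbc with hbc | ⟨hbc, hbc'⟩
  · exact Or.inl (hab.trans hbc)
  · exact Or.inl (hab.trans_eq hbc)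
  · exact Or.inl (hab.trans_lt hbc)
  · exact Or.inr ⟨hab.trans hbc, hr.2.1 _ _ _ hab' hbc'⟩

theorem rdelta_isStrictTotalOrder (hr : WellMonomialOrdering r) :
    IsStrictTotalOrder (WMon n) (rdelta W δ r) where
  irrefl a := by
    rintro (h | ⟨-, h⟩)
    exacts [lt_irrefl _ h, hr.1 a h]
  trans _ _ _ := rdelta_trans hr
  trichotomous a b hab hba := by
    by_contra hne
    rcases lt_trichotomy (δ (wmono W.x W.D a)) (δ (wmono W.x W.D b)) with h | h | h
    · exact hab (Or.inl h)
    · rcases hr.2.2.1 a b hne with h' | h'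
      exacts [hab (Or.inr ⟨h, h'⟩), hba (Or.inr ⟨h.symm, h'⟩)]
    · exact hba (Or.inl h)

theorem rdelta_add_right (hδ : IsAdmissible W δ) (hr : WellMonomialOrdering r) {a b : WMon n}
    (h : rdelta W δ r a b) (c : WMon n) : rdelta W δ r (a + c) (b + c) := by
  simp only [rdelta, hδ.map_wmono_add]
  rcases h with h | ⟨h, h'⟩
  · exact Or.inl (WithBot.add_lt_add_right (hδ.map_wmono_ne_bot c) h)
  · exact Or.inr ⟨by rw [h], hr.2.2.2.1 _ _ _ h'⟩

theorem rdelta_add_diag (hδ : IsAdmissible W δ) (hr : WellMonomialOrdering r) (v : WMon n)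
    {μ : Fin n → ℕ} (hμ : μ ≠ 0) : rdelta W δ r v (v + (μ, μ)) := by
  have hle : δ (wmono W.x W.D v) ≤ δ (wmono W.x W.D (v + (μ, μ))) := by
    rw [hδ.map_wmono_add]
    exact le_add_of_nonneg_right (hδ.map_wmono_diag_nonneg μ)
  rcases hle.lt_or_eq with h | h
  · exact Or.inl h
  · exact Or.inr ⟨h, hr.rel_add_self (fun h0 => hμ (congrArg Prod.fst h0)) v⟩

end rdelta

namespace IsExp

variable {K : Type*} [Field K] {n : ℕ} {A : Type*} [Ring A] [Algebra K A] {W : WeylData K n A}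

theorem ne_zero {rd : WMon n → WMon n → Prop} {P : A} {e : WMon n} (h : IsExp W rd P e) :
    P ≠ 0 := by
  rintro rfl
  simp [IsExp, ND] at h

theorem map_eq {δ : A → WithBot ℤ} (hδ : IsAdmissible W δ) {r : WMon n → WMon n → Prop}
    {Q : A} {e : WMon n} (h : IsExp W (rdelta W δ r) Q e) : δ Q = δ (wmono W.x W.D e) := by
  rw [hδ.2 Q h.ne_zero]
  refine le_antisymm (Finset.sup_le fun f hf => ?_) (Finset.le_sup (f := fun ab => δ _) h.1)
  by_cases hfe : f = e
  · rw [hfe]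
  · rcases h.2 f hf hfe with hlt | ⟨heq, -⟩
    exacts [hlt.le, heq.le]

end IsExp

theorem exists_isExp {K : Type*} [Field K] {n : ℕ} {A : Type*} [Ring A] [Algebra K A]
    (W : WeylData K n A) (δ : A → WithBot ℤ) {r : WMon n → WMon n → Prop}
    (hr : WellMonomialOrdering r) {Q : A} (hQ : Q ≠ 0) : ∃ e, IsExp W (rdelta W δ r) Q e := by
  have := rdelta_isStrictTotalOrder (W := W) (δ := δ) hr
  have hND : (ND W Q).Nonempty := by
    simpa [ND, Finsupp.support_nonempty_iff] using hQ
  exact (ND W Q).exists_forall_rel_of_isStrictTotalOrder hND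

namespace WeylData

variable {K : Type*} [Field K] {n : ℕ} {A : Type*} [Ring A] [Algebra K A] (W : WeylData K n A)

def spanBelow (rd : WMon n → WMon n → Prop) (v : WMon n) : Submodule K A :=
  Submodule.span K (W.basis '' {u | rd u v})

variable {W} {rd : WMon n → WMon n → Prop}

theorem mem_spanBelow_iff {v : WMon n} {P : A} :
    P ∈ W.spanBelow rd v ↔ ∀ u ∈ ND W P, rd u v :=
  W.basis.mem_span_image

theorem wmono_mem_spanBelow {u v : WMon n} (h : rd u v) : wmono W.x W.D u ∈ W.spanBelow rd v := by
  rw [← W.basis_eq]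
  exact Submodule.subset_span ⟨u, h, rfl⟩

theorem spanBelow_mono (htrans : ∀ a b c, rd a b → rd b c → rd a c) {v w : WMon n}
    (h : rd v w) : W.spanBelow rd v ≤ W.spanBelow rd w :=
  Submodule.span_mono (Set.image_mono fun _ hu => htrans _ _ _ hu h)

theorem sum_repr_smul_wmono (P : A) :
    ∑ ab ∈ ND W P, W.basis.repr P ab • wmono W.x W.D ab = P := by
  conv_rhs => rw [← W.basis.linearCombination_repr P]
  simp [Finsupp.linearCombination_apply, Finsupp.sum, ND, W.basis_eq]

end WeylData

open WeylData

theorem IsAdmissible.wmono_mul_wmono_sub_mem_spanBelow {K : Type*} [Field K] {n : ℕ} {A : Type*}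
    [Ring A] [Algebra K A] {W : WeylData K n A} {δ : A → WithBot ℤ} (hδ : IsAdmissible W δ)
    {r : WMon n → WMon n → Prop} (hr : WellMonomialOrdering r) (a b : WMon n) :
    wmono W.x W.D a * wmono W.x W.D b - wmono W.x W.D (a + b) ∈
      W.spanBelow (rdelta W δ r) (a + b) := by
  refine Submodule.span_le.mpr ?_ (W.wmono_mul_wmono_sub_mem_span a b)
  rintro _ ⟨v, ⟨μ, hμ, hv⟩, rfl⟩
  exact wmono_mem_spanBelow (hv ▸ rdelta_add_diag hδ hr v hμ)

namespace IsExp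

variable {K : Type*} [Field K] {n : ℕ} {A : Type*} [Ring A] [Algebra K A] {W : WeylData K n A}

theorem sub_smul_wmono_mem_spanBelow {rd : WMon n → WMon n → Prop} {Q : A} {v : WMon n}
    (h : IsExp W rd Q v) : Q - W.basis.repr Q v • wmono W.x W.D v ∈ W.spanBelow rd v := by
  refine mem_spanBelow_iff.mpr fun u hu => ?_
  simp only [ND, ← W.basis_eq, map_sub, map_smul, W.basis.repr_self, Finsupp.mem_support_iff,
    Finsupp.sub_apply, Finsupp.smul_apply, Finsupp.single_apply, smul_eq_mul] at hu
  by_cases huv : u = v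
  · simp [huv] at hu
  · rw [if_neg (Ne.symm huv), mul_zero, sub_zero] at hu
    exact h.2 u (Finsupp.mem_support_iff.mpr hu) huv

theorem rel_of_mem_spanBelow {rd : WMon n → WMon n → Prop} {Q : A} {e v : WMon n}
    (h : IsExp W rd Q e) (hQ : Q ∈ W.spanBelow rd v) : rd e v :=
  mem_spanBelow_iff.mp hQ e h.1

variable {δ : A → WithBot ℤ} (hδ : IsAdmissible W δ) {r : WMon n → WMon n → Prop}
  (hr : WellMonomialOrdering r)
include hδ hr

theorem wmono_mul_sub_mem_spanBelow {Q : A} {e : WMon n} (h : IsExp W (rdelta W δ r) Q e)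
    (γ : WMon n) :
    wmono W.x W.D γ * Q - W.basis.repr Q e • wmono W.x W.D (γ + e) ∈
      W.spanBelow (rdelta W δ r) (γ + e) := by
  have hlower : ∀ ab ∈ (ND W Q).erase e,
      wmono W.x W.D γ * wmono W.x W.D ab ∈ W.spanBelow (rdelta W δ r) (γ + e) := by
    intro ab hab
    have hlt : rdelta W δ r (γ + ab) (γ + e) := by
      rw [add_comm γ ab, add_comm γ e]
      exact rdelta_add_right hδ hr
        (h.2 ab (Finset.mem_of_mem_erase hab) (Finset.ne_of_mem_erase hab)) γ
    rw [← sub_add_cancel (wmono W.x W.D γ * wmono W.x W.D ab) (wmono W.x W.D (γ + ab))]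
    exact add_mem (spanBelow_mono (rd := rdelta W δ r) (fun _ _ _ => rdelta_trans hr) hlt
      (hδ.wmono_mul_wmono_sub_mem_spanBelow hr γ ab)) (wmono_mem_spanBelow hlt)
  have hexpand : wmono W.x W.D γ * Q - W.basis.repr Q e • wmono W.x W.D (γ + e)
      = W.basis.repr Q e • (wmono W.x W.D γ * wmono W.x W.D e - wmono W.x W.D (γ + e))
        + ∑ ab ∈ (ND W Q).erase e,
            W.basis.repr Q ab • (wmono W.x W.D γ * wmono W.x W.D ab) := by
    have hmul : wmono W.x W.D γ * Q
        = ∑ ab ∈ ND W Q, W.basis.repr Q ab • (wmono W.x W.D γ * wmono W.x W.D ab) := by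
      conv_lhs => rw [← W.sum_repr_smul_wmono Q]
      simp only [Finset.mul_sum, mul_smul_comm]
    rw [hmul, ← Finset.add_sum_erase _ _ h.1, smul_sub]
    abel
  rw [hexpand]
  exact add_mem (Submodule.smul_mem _ _ (hδ.wmono_mul_wmono_sub_mem_spanBelow hr γ e))
    (Submodule.sum_mem _ fun ab hab => Submodule.smul_mem _ _ (hlower ab hab))

theorem exists_smul_wmono_mul_sub_mem_spanBelow {P Q : A} {e γ : WMon n}
    (hP : IsExp W (rdelta W δ r) P e) (hQ : IsExp W (rdelta W δ r) Q (γ + e)) :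
    ∃ c : K, c ≠ 0 ∧
      Q - c • (wmono W.x W.D γ * P) ∈ W.spanBelow (rdelta W δ r) (γ + e) := by
  have hP0 : W.basis.repr P e ≠ 0 := Finsupp.mem_support_iff.mp hP.1
  have hQ0 : W.basis.repr Q (γ + e) ≠ 0 := Finsupp.mem_support_iff.mp hQ.1
  set c := W.basis.repr Q (γ + e) / W.basis.repr P e
  have hsplit : Q - c • (wmono W.x W.D γ * P)
      = (Q - W.basis.repr Q (γ + e) • wmono W.x W.D (γ + e))
        - c • (wmono W.x W.D γ * P - W.basis.repr P e • wmono W.x W.D (γ + e)) := by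
    rw [smul_sub, smul_smul, div_mul_cancel₀ _ hP0]
    abel
  refine ⟨c, div_ne_zero hQ0 hP0, ?_⟩
  rw [hsplit]
  exact sub_mem hQ.sub_smul_wmono_mem_spanBelow
    (Submodule.smul_mem _ _ (hP.wmono_mul_sub_mem_spanBelow hδ hr γ))

end IsExp

structure IsSymbolMap (K : Type*) [Field K] {A gr : Type*} [Ring A] [Algebra K A] [Ring gr]
    [Algebra K gr] (δ : A → WithBot ℤ) (σ : A → gr) : Prop where
  map_smul : ∀ (c : K) (P : A), σ (c • P) = c • σ P
  map_mul : ∀ P Q : A, σ (P * Q) = σ P * σ Q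
  map_add_of_eq : ∀ P Q : A, δ P = δ Q → δ (P + Q) = δ P → σ (P + Q) = σ P + σ Q
  map_add_of_lt : ∀ P Q : A, δ Q < δ P → σ (P + Q) = σ P

theorem symbol_mem_span_of_isExp {K : Type*} [Field K] {n : ℕ} {A : Type*} [Ring A]
    [Algebra K A] {W : WeylData K n A} {δ : A → WithBot ℤ} (hδ : IsAdmissible W δ)
    {r : WMon n → WMon n → Prop} (hr : WellMonomialOrdering r) {gr : Type*} [Ring gr]
    [Algebra K gr] {σ : A → gr} (hσ : IsSymbolMap K δ σ) {I : Ideal A} {m : ℕ}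
    {P : Fin m → A} (hPI : ∀ i, P i ∈ I) {e : Fin m → WMon n}
    (hexp : ∀ i, IsExp W (rdelta W δ r) (P i) (e i))
    (hstd : {v : WMon n | ∃ Q ∈ I, Q ≠ 0 ∧ IsExp W (rdelta W δ r) Q v} ⊆
      {v : WMon n | ∃ i, ∃ γ : WMon n, v = e i + γ})
    (v : WMon n) :
    ∀ Q ∈ I, IsExp W (rdelta W δ r) Q v →
      σ Q ∈ Ideal.span (Set.range fun i => σ (P i)) := by
  induction v using hr.2.2.2.2.induction with
  | _ v ih =>
    intro Q hQI hQ
    obtain ⟨i, γ, hv⟩ := hstd ⟨Q, hQI, hQ.ne_zero, hQ⟩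
    obtain rfl : v = γ + e i := hv.trans (add_comm _ _)
    obtain ⟨c, hc, hred⟩ := (hexp i).exists_smul_wmono_mul_sub_mem_spanBelow hδ hr hQ
    set R := c • (wmono W.x W.D γ * P i)
    have hRI : R ∈ I := Submodule.smul_of_tower_mem _ c (I.mul_mem_left _ (hPI i))
    have hRσ : σ R ∈ Ideal.span (Set.range fun i => σ (P i)) := by
      rw [hσ.map_smul, hσ.map_mul]
      exact Submodule.smul_of_tower_mem _ c
        (Ideal.mul_mem_left _ _ (Ideal.subset_span ⟨i, rfl⟩))
    have hδR : δ R = δ (wmono W.x W.D (γ + e i)) := by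
      rw [hδ.1.map_smul hc, hδ.1.mul, (hexp i).map_eq hδ, hδ.map_wmono_add]
    rw [← add_sub_cancel R Q]
    by_cases hQR : Q - R = 0
    · rwa [hQR, add_zero]
    obtain ⟨e', he'⟩ := exists_isExp W δ hr hQR
    rcases he'.rel_of_mem_spanBelow hred with hlt | ⟨heq, hrel⟩
    · rwa [hσ.map_add_of_lt _ _ (by rwa [he'.map_eq hδ, hδR])]
    · rw [hσ.map_add_of_eq _ _ (by rw [he'.map_eq hδ, hδR, heq])
        (by rw [add_sub_cancel, hQ.map_eq hδ, hδR])]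
      exact add_mem hRσ (ih e' hrel _ (I.sub_mem hQI hRI) he')

theorem standard_basis_generates_gr_general (K : Type*) [Field K] (n : ℕ) (A : Type*) [Ring A]
    [Algebra K A] (W : WeylData K n A) (δ : A → WithBot ℤ) (hδ : IsAdmissible W δ)
    (r : WMon n → WMon n → Prop) (hr : WellMonomialOrdering r)
    -- data presenting the associated graded ring `gr_δ(A_n(K))` with symbol map `σ`:
    (gr : Type*) [Ring gr] [Algebra K gr] (σ : A → gr)
    (hsmul : ∀ (c : K) (P : A), σ (c • P) = c • σ P)
    (hmul : ∀ P Q : A, σ (P * Q) = σ P * σ Q)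
    (hadd : ∀ P Q : A, δ P = δ Q → δ (P + Q) = δ P → σ (P + Q) = σ P + σ Q)
    (htop : ∀ P Q : A, δ Q < δ P → σ (P + Q) = σ P)
    -- a `δ`-standard basis `P₁,…,P_r` of a nonzero left ideal `I`:
    (I : Ideal A) (m : ℕ) (P : Fin m → A)
    (hPI : ∀ i, P i ∈ I) (e : Fin m → WMon n)
    (hexp : ∀ i, IsExp W (rdelta W δ r) (P i) (e i))
    (hstd : {v : WMon n | ∃ Q ∈ I, Q ≠ 0 ∧ IsExp W (rdelta W δ r) Q v} =
      {v : WMon n | ∃ i, ∃ γ : WMon n, v = e i + γ}) :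
    Ideal.span {g : gr | ∃ Q ∈ I, Q ≠ 0 ∧ g = σ Q} =
      Ideal.span (Set.range fun i => σ (P i)) := by
  refine le_antisymm (Ideal.span_le.mpr ?_) (Ideal.span_le.mpr ?_)
  · rintro _ ⟨Q, hQI, hQ, rfl⟩
    obtain ⟨v, hv⟩ := exists_isExp W δ hr hQ
    exact symbol_mem_span_of_isExp hδ hr ⟨hsmul, hmul, hadd, htop⟩ hPI hexp hstd.subset v Q
      hQI hv
  · rintro _ ⟨i, rfl⟩
    exact Ideal.subset_span ⟨P i, hPI i, (hexp i).ne_zero, rfl⟩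

/-- if `P₁,…,P_r` is a `δ`-standard basis of a nonzero left ideal `I`,
then the principal symbols `σ(P₁),…,σ(P_r)` generate the graded (left) ideal `gr_δ(I)`
of the associated graded ring. -/
theorem standard_basis_generates_gr (K : Type*) [Field K] (n : ℕ) (A : Type*) [Ring A]
    [Algebra K A] (W : WeylData K n A) (δ : A → WithBot ℤ) (hδ : IsAdmissible W δ)
    (r : WMon n → WMon n → Prop) (hr : WellMonomialOrdering r)
    -- data presenting the associated graded ring `gr_δ(A_n(K))` with symbol map `σ`:
    (gr : Type*) [Ring gr] [Algebra K gr] (grade : ℤ → Submodule K gr) (σ : A → gr)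
    (hinternal : DirectSum.IsInternal grade)
    (hσ0 : σ 0 = 0)
    (hmem : ∀ (P : A) (k : ℤ), δ P = (k : WithBot ℤ) → σ P ∈ grade k)
    (hne : ∀ P : A, P ≠ 0 → σ P ≠ 0)
    (hsmul : ∀ (c : K) (P : A), σ (c • P) = c • σ P)
    (hmul : ∀ P Q : A, σ (P * Q) = σ P * σ Q)
    (hadd : ∀ P Q : A, δ P = δ Q → δ (P + Q) = δ P → σ (P + Q) = σ P + σ Q)
    (htop : ∀ P Q : A, δ Q < δ P → σ (P + Q) = σ P)
    (hsurj : ∀ (k : ℤ) (g : gr), g ∈ grade k → g ≠ 0 →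
      ∃ P : A, δ P = (k : WithBot ℤ) ∧ σ P = g)
    -- a `δ`-standard basis `P₁,…,P_r` of a nonzero left ideal `I`:
    (I : Ideal A) (hI : I ≠ ⊥) (m : ℕ) (P : Fin m → A)
    (hPI : ∀ i, P i ∈ I) (hPne : ∀ i, P i ≠ 0) (e : Fin m → WMon n)
    (hexp : ∀ i, IsExp W (rdelta W δ r) (P i) (e i))
    (hstd : {v : WMon n | ∃ Q ∈ I, Q ≠ 0 ∧ IsExp W (rdelta W δ r) Q v} =
      {v : WMon n | ∃ i, ∃ γ : WMon n, v = e i + γ}) :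
    Ideal.span {g : gr | ∃ Q ∈ I, Q ≠ 0 ∧ g = σ Q} =
      Ideal.span (Set.range fun i => σ (P i)) :=
  standard_basis_generates_gr_general K n A W δ hδ r hr gr σ hsmul hmul hadd htop I m P hPI e hexp
    hstd
end
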